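/- Let p be a C¹ function on [t₀, ∞) with p(t) ~ t^{-α} and p'(t) ~ -α t^{-α-1} as t → ∞, for some α > 0, and let q be a C¹ function with q(t) ~ t and q'(t) ~ 1 as t → ∞. Let x(t) = p(t) sin q(t) and y(t) = x'(t) = p'(t) sin q(t) + p(t) q'(t) cos q(t). Then r(t) = √(x(t)² + y(t)²) satisfies r(t) ~ t^{-α} as t → ∞. -/

import Mathlib

/-!
Divide by `t^{-α}`: with `a = p / t^{-α} → 1`, `b = p' / t^{-α} → 0` (as `p' ~ -α t^{-α-1}`) and
`c = q' → 1`, the rescaled radius is the modulus of `a sin q + (b sin q + a c cos q) i`, which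
differs from the unit vector `sin q + i cos q` by a quantity tending to `0`.
-/

open Real Filter Set

open Topology in
theorem tendsto_sqrt_sq_mul_sin_add_sq_of_tendsto {ι : Type*} {l : Filter ι} {a b c θ : ι → ℝ}
    (ha : Tendsto a l (𝓝 1)) (hb : Tendsto b l (𝓝 0)) (hc : Tendsto c l (𝓝 1)) :
    Tendsto (fun t => √((a t * Real.sin (θ t)) ^ 2 +
      (b t * Real.sin (θ t) + a t * c t * Real.cos (θ t)) ^ 2)) l (𝓝 1) := by
  have hsin : IsBoundedUnder (· ≤ ·) l ((‖·‖) ∘ fun t => Real.sin (θ t)) :=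
    isBoundedUnder_of ⟨1, fun t => by simpa using abs_sin_le_one (θ t)⟩
  have hcos : IsBoundedUnder (· ≤ ·) l ((‖·‖) ∘ fun t => Real.cos (θ t)) :=
    isBoundedUnder_of ⟨1, fun t => by simpa using abs_cos_le_one (θ t)⟩
  set v : ι → ℂ := fun t => (a t * Real.sin (θ t) : ℝ) +
    (b t * Real.sin (θ t) + a t * c t * Real.cos (θ t) : ℝ) * Complex.I
  set w : ι → ℂ := fun t => (Real.sin (θ t) : ℝ) + (Real.cos (θ t) : ℝ) * Complex.I
  have hw : ∀ t, ‖w t‖ = 1 := fun t => by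
    rw [Complex.norm_add_mul_I, Real.sin_sq_add_cos_sq, sqrt_one]
  have hvw : Tendsto (fun t => v t - w t) l (𝓝 0) := by
    have ha₁ : Tendsto (fun t => a t - 1) l (𝓝 0) := by simpa using ha.sub_const 1
    have hac : Tendsto (fun t => a t * c t - 1) l (𝓝 0) := by
      simpa using (ha.mul hc).sub_const 1
    have hre : Tendsto (fun t => (a t - 1) * Real.sin (θ t)) l (𝓝 0) :=
      ha₁.zero_mul_isBoundedUnder_le hsin
    have him : Tendsto (fun t => b t * Real.sin (θ t) + (a t * c t - 1) * Real.cos (θ t))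
        l (𝓝 0) := by
      simpa using (hb.zero_mul_isBoundedUnder_le hsin).add (hac.zero_mul_isBoundedUnder_le hcos)
    have := ((Complex.continuous_ofReal.tendsto 0).comp hre).add
      (((Complex.continuous_ofReal.tendsto 0).comp him).mul_const Complex.I)
    simp only [Function.comp_def, Complex.ofReal_zero, zero_mul, add_zero] at this
    convert this using 2 with t
    simp only [v, w]
    push_cast
    ring
  have hv : Tendsto (fun t => ‖v t‖) l (𝓝 1) := by
    rw [tendsto_iff_norm_sub_tendsto_zero]
    refine squeeze_zero (fun _ => norm_nonneg _) (fun t => ?_) (by simpa using hvw.norm)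
    rw [← hw t]
    exact abs_norm_sub_norm_le _ _
  simpa only [v, Complex.norm_add_mul_I] using hv

theorem tendsto_div_rpow_zero_of_tendsto_div_mul_rpow_sub_one {f : ℝ → ℝ} {c β : ℝ}
    (hc : c ≠ 0) (hf : Tendsto (fun t => f t / (c * t ^ (β - 1))) atTop (nhds 1)) :
    Tendsto (fun t => f t / t ^ β) atTop (nhds 0) := by
  have h := hf.mul (tendsto_const_nhds (x := c).div_atTop tendsto_id)
  rw [one_mul] at h
  refine h.congr' ?_
  filter_upwards [eventually_gt_atTop 0] with t ht
  rw [rpow_sub_one ht.ne', id]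
  have := (rpow_pos_of_pos ht β).ne'
  field_simp

theorem stmt_3_general (α : ℝ) (hα : 0 < α) (p q : ℝ → ℝ)
    (hp : Tendsto (fun t => p t / t ^ (-α)) atTop (nhds 1))
    (hp' : Tendsto (fun t => deriv p t / (-α * t ^ (-α - 1))) atTop (nhds 1))
    (hq' : Tendsto (fun t => deriv q t) atTop (nhds 1)) :
    Tendsto
      (fun t => Real.sqrt ((p t * Real.sin (q t)) ^ 2 +
        (deriv p t * Real.sin (q t) + p t * deriv q t * Real.cos (q t)) ^ 2) / t ^ (-α))
      atTop (nhds 1) := by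
  have hb := tendsto_div_rpow_zero_of_tendsto_div_mul_rpow_sub_one (neg_ne_zero.2 hα.ne') hp'
  refine (tendsto_sqrt_sq_mul_sin_add_sq_of_tendsto (θ := q) hp hb hq').congr' ?_
  filter_upwards [eventually_gt_atTop 0] with t ht
  have hT := rpow_pos_of_pos ht (-α)
  rw [eq_div_iff hT.ne']
  conv_lhs => arg 2; rw [← sqrt_sq hT.le]
  rw [← sqrt_mul (by positivity)]
  congr 1
  field_simp

/-- If `p(t) ~ t^{-α}`, `p'(t) ~ -α t^{-α-1}` (α > 0), `q(t) ~ t`, `q'(t) ~ 1` as `t → ∞`,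
then for `x(t) = p(t) sin q(t)` and `y(t) = x'(t)` the radius
`r(t) = √(x(t)² + y(t)²)` satisfies `r(t) ~ t^{-α}` as `t → ∞`. -/
theorem stmt_3 (α t₀ : ℝ) (hα : 0 < α) (p q : ℝ → ℝ)
    (hp_diff : Differentiable ℝ p) (hq_diff : Differentiable ℝ q)
    (hp : Tendsto (fun t => p t / t ^ (-α)) atTop (nhds 1))
    (hp' : Tendsto (fun t => deriv p t / (-α * t ^ (-α - 1))) atTop (nhds 1))
    (hq : Tendsto (fun t => q t / t) atTop (nhds 1))
    (hq' : Tendsto (fun t => deriv q t) atTop (nhds 1)) :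
    Tendsto
      (fun t => Real.sqrt ((p t * Real.sin (q t)) ^ 2 +
        (deriv p t * Real.sin (q t) + p t * deriv q t * Real.cos (q t)) ^ 2) / t ^ (-α))
      atTop (nhds 1) :=
  stmt_3_general α hα p q hp hp' hq'
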